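/- Let u be a smooth divergence-free solution of the stratified Navier–Stokes equations with vorticity ω = curl u satisfying Dω/Dt − (ω·∇)u = Re⁻¹Δω − ∇⊥θ and Dθ/Dt = (σRe)⁻¹Δθ. Then q = ω·∇θ satisfies Dq/Dt = div( Re⁻¹ Δu × ∇θ + (σRe)⁻¹ ω Δθ ). -/

import Mathlib

noncomputable section

/-- Space: ℝ³ as functions `Fin 3 → ℝ`. -/
abbrev V : Type := Fin 3 → ℝ

/-- Standard basis vector. -/
def e3 (i : Fin 3) : V := fun j => if j = i then 1 else 0

/-- Partial derivative in direction `i`. -/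
def pd (i : Fin 3) (f : V → ℝ) (x : V) : ℝ := fderiv ℝ f x (e3 i)

/-- Gradient. -/
def grad3 (f : V → ℝ) (x : V) : V := fun i => pd i f x

/-- Divergence. -/
def div3 (v : V → V) (x : V) : ℝ := ∑ i, pd i (fun y => v y i) x

/-- Curl. -/
def curl3 (v : V → V) (x : V) : V :=
  ![pd 1 (fun y => v y 2) x - pd 2 (fun y => v y 1) x,
    pd 2 (fun y => v y 0) x - pd 0 (fun y => v y 2) x,
    pd 0 (fun y => v y 1) x - pd 1 (fun y => v y 0) x]

/-- Cross product on ℝ³. -/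
def cross3 (a b : V) : V :=
  ![a 1 * b 2 - a 2 * b 1, a 2 * b 0 - a 0 * b 2, a 0 * b 1 - a 1 * b 0]

/-- Dot product. -/
def dot3 (a b : V) : ℝ := ∑ i, a i * b i

/-- Scalar Laplacian. -/
def lap3 (f : V → ℝ) (x : V) : ℝ := ∑ i, pd i (fun y => pd i f y) x

/-- Componentwise (vector) Laplacian. -/
def vlap3 (v : V → V) (x : V) : V := fun i => lap3 (fun y => v y i) x

/-- Directional derivative `(a·∇)b`. -/
def dirD (a b : V → V) (x : V) : V := fun i => dot3 (a x) (grad3 (fun y => b y i) x)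

/-- Time derivative of a time-dependent scalar field. -/
def tder (f : ℝ → V → ℝ) (t : ℝ) (x : V) : ℝ := deriv (fun s => f s x) t

/-- Time derivative of a time-dependent vector field. -/
def tderV (v : ℝ → V → V) (t : ℝ) (x : V) : V := fun i => deriv (fun s => v s x i) t

/-- Material derivative of a scalar: `∂ₜ f + u·∇f`. -/
def matD (u : ℝ → V → V) (f : ℝ → V → ℝ) (t : ℝ) (x : V) : ℝ :=
  tder f t x + dot3 (u t x) (grad3 (f t) x)

/-- Material derivative of a vector field, componentwise. -/
def matDV (u v : ℝ → V → V) (t : ℝ) (x : V) : V :=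
  fun i => tderV v t x i + dot3 (u t x) (grad3 (fun y => v t y i) x)

/-- The perpendicular gradient `∇⊥θ = (∂_y θ, −∂_x θ, 0)`. -/
def gradPerp (f : V → ℝ) (x : V) : V := ![pd 1 f x, -(pd 0 f x), 0]

abbrev P : Type := ℝ × V

def Dw (w : P) (F : P → ℝ) : P → ℝ := fun p => fderiv ℝ F p w

def dirt : P := (1, 0)
def dir (i : Fin 3) : P := (0, e3 i)

@[fun_prop]
lemma Dw_contDiff {F : P → ℝ} (hF : ContDiff ℝ (⊤ : ℕ∞) F) (w : P) : ContDiff ℝ (⊤ : ℕ∞) (Dw w F) :=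
  (hF.fderiv_right (le_refl _)).clm_apply contDiff_const

@[fun_prop]
lemma Dw_differentiable {F : P → ℝ} (hF : ContDiff ℝ (⊤ : ℕ∞) F) (w : P) : Differentiable ℝ (Dw w F) :=
  (Dw_contDiff hF w).differentiable (by simp)

lemma pd_slice {F : P → ℝ} (hF : ContDiff ℝ (⊤ : ℕ∞) F) (i : Fin 3) (t : ℝ) (x : V) :
    pd i (fun y => F (t, y)) x = Dw (dir i) F (t, x) := by
  have h1 : HasFDerivAt F (fderiv ℝ F (t, x)) (t, x) :=
    (hF.differentiable (by simp) (t, x)).hasFDerivAt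
  have h2 : HasFDerivAt (fun y => F (t, y))
      ((fderiv ℝ F (t, x)).comp (ContinuousLinearMap.inr ℝ ℝ V)) x :=
    h1.comp x (hasFDerivAt_prodMk_right t x)
  rw [pd, h2.fderiv]
  rfl

lemma deriv_slice {F : P → ℝ} (hF : ContDiff ℝ (⊤ : ℕ∞) F) (t : ℝ) (x : V) :
    deriv (fun s => F (s, x)) t = Dw dirt F (t, x) := by
  have h1 : HasFDerivAt F (fderiv ℝ F (t, x)) (t, x) :=
    (hF.differentiable (by simp) (t, x)).hasFDerivAt
  have h2 : HasFDerivAt (fun s => F (s, x))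
      ((fderiv ℝ F (t, x)).comp (ContinuousLinearMap.inl ℝ ℝ V)) t :=
    h1.comp t (hasFDerivAt_prodMk_left t x)
  rw [h2.hasDerivAt.deriv]
  rfl

lemma pd_add {f g : V → ℝ} {x : V} (hf : DifferentiableAt ℝ f x)
    (hg : DifferentiableAt ℝ g x) (i : Fin 3) :
    pd i (fun y => f y + g y) x = pd i f x + pd i g x := by
  simp [pd, fderiv_fun_add hf hg]

lemma pd_sub {f g : V → ℝ} {x : V} (hf : DifferentiableAt ℝ f x)
    (hg : DifferentiableAt ℝ g x) (i : Fin 3) :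
    pd i (fun y => f y - g y) x = pd i f x - pd i g x := by
  simp [pd, fderiv_fun_sub hf hg]

lemma pd_mul {f g : V → ℝ} {x : V} (hf : DifferentiableAt ℝ f x)
    (hg : DifferentiableAt ℝ g x) (i : Fin 3) :
    pd i (fun y => f y * g y) x = f x * pd i g x + g x * pd i f x := by
  simp [pd, fderiv_fun_mul hf hg]

lemma pd_neg {f : V → ℝ} {x : V} (i : Fin 3) :
    pd i (fun y => -f y) x = -pd i f x := by
  simp [pd, fderiv_neg]

lemma pd_const (c : ℝ) (x : V) (i : Fin 3) : pd i (fun _ => c) x = 0 := by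
  simp [pd]

lemma Dw_swap {F : P → ℝ} (hF : ContDiff ℝ (⊤ : ℕ∞) F) (v w : P) :
    Dw v (Dw w F) = Dw w (Dw v F) := by
  funext p
  have hd : Differentiable ℝ F := hF.differentiable (by simp)
  have h1 : ∀ y, HasFDerivAt F (fderiv ℝ F y) y := fun y => (hd y).hasFDerivAt
  have hcd : DifferentiableAt ℝ (fderiv ℝ F) p :=
    ((hF.fderiv_right (m := (⊤ : ℕ∞)) (le_refl _)).differentiable (by simp)) p
  have hsym := second_derivative_symmetric h1 hcd.hasFDerivAt
  have e : ∀ a b : P, Dw a (Dw b F) p = fderiv ℝ (fderiv ℝ F) p a b := by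
    intro a b
    have h3 : fderiv ℝ (fun y => fderiv ℝ F y b) p =
        (fderiv ℝ F p).comp (fderiv ℝ (fun _ : P => b) p) +
          (fderiv ℝ (fderiv ℝ F) p).flip b :=
      fderiv_clm_apply hcd (differentiableAt_const b)
    show fderiv ℝ (fun y => fderiv ℝ F y b) p a = fderiv ℝ (fderiv ℝ F) p a b
    rw [h3]
    simp
  rw [e, e, hsym v w]

lemma swap_t {F : P → ℝ} (hF : ContDiff ℝ (⊤ : ℕ∞) F) (i : Fin 3) :
    Dw (dir i) (Dw dirt F) = Dw dirt (Dw (dir i) F) := Dw_swap hF _ _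

lemma swap_d {F : P → ℝ} (hF : ContDiff ℝ (⊤ : ℕ∞) F) (i j : Fin 3) (_ : j < i) :
    Dw (dir i) (Dw (dir j) F) = Dw (dir j) (Dw (dir i) F) := Dw_swap hF _ _

set_option maxHeartbeats 4000000 in
/-- stratified Navier–Stokes: with `ω = curl u`,
`Dω/Dt − (ω·∇)u = Re⁻¹Δω − ∇⊥θ` and `Dθ/Dt = (σRe)⁻¹Δθ`, the potential
vorticity `q = ω·∇θ` satisfies
`Dq/Dt = div(Re⁻¹ Δu × ∇θ + (σRe)⁻¹ Δθ ω)`. -/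
theorem stmt6 (u : ℝ → V → V) (θ : ℝ → V → ℝ) (Re σ : ℝ)
    (hRe : 0 < Re) (hσ : 0 < σ)
    (hu : ContDiff ℝ (⊤ : ℕ∞) (fun p : ℝ × V => u p.1 p.2))
    (hθ : ContDiff ℝ (⊤ : ℕ∞) (fun p : ℝ × V => θ p.1 p.2))
    (hdiv : ∀ t x, div3 (u t) x = 0)
    (ω : ℝ → V → V) (hω : ∀ t x, ω t x = curl3 (u t) x)
    (hωeq : ∀ t x, matDV u ω t x - dirD (ω t) (u t) x =
      Re⁻¹ • vlap3 (ω t) x - gradPerp (θ t) x)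
    (hθeq : ∀ t x, matD u θ t x = (σ * Re)⁻¹ * lap3 (θ t) x)
    (q : ℝ → V → ℝ) (hq : ∀ t x, q t x = dot3 (ω t x) (grad3 (θ t) x)) :
    ∀ t x, matD u q t x =
      div3 (fun y => Re⁻¹ • cross3 (vlap3 (u t) y) (grad3 (θ t) y) +
        ((σ * Re)⁻¹ * lap3 (θ t) y) • ω t y) x := by
  intro t x
  obtain ⟨T, hT, hθT⟩ : ∃ T : P → ℝ, ContDiff ℝ (⊤ : ℕ∞) T ∧ θ = fun t y => T (t, y) :=
    ⟨fun p => θ p.1 p.2, hθ, rfl⟩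
  obtain ⟨U, hU, huU⟩ : ∃ U : Fin 3 → P → ℝ,
      (∀ i, ContDiff ℝ (⊤ : ℕ∞) (U i)) ∧ u = fun t y i => U i (t, y) :=
    ⟨fun i p => u p.1 p.2 i, fun i => contDiff_pi.1 hu i, rfl⟩
  have hU0 := hU 0; have hU1 := hU 1; have hU2 := hU 2
  have hTd : Differentiable ℝ T := hT.differentiable (by simp)
  have hU0d : Differentiable ℝ (U 0) := hU0.differentiable (by simp)
  have hU1d : Differentiable ℝ (U 1) := hU1.differentiable (by simp)
  have hU2d : Differentiable ℝ (U 2) := hU2.differentiable (by simp)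
  have hω' : ω = fun t x => curl3 (u t) x := funext fun a => funext fun b => hω a b
  have hq' : q = fun t x => dot3 (ω t x) (grad3 (θ t) x) :=
    funext fun a => funext fun b => hq a b
  have hω0 := congrFun (hωeq t x) 0
  have hω1 := congrFun (hωeq t x) 1
  have hω2 := congrFun (hωeq t x) 2
  have hθfun : (fun y => matD u θ t y) = fun y => (σ * Re)⁻¹ * lap3 (θ t) y :=
    funext fun y => hθeq t y
  have hp0 := congrArg (fun f => pd 0 f x) hθfun
  have hp1 := congrArg (fun f => pd 1 f x) hθfun
  have hp2 := congrArg (fun f => pd 2 f x) hθfun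
  simp only [hq', hω', huU, hθT, matD, matDV, tder, tderV, dirD, div3, grad3, lap3,
    vlap3, curl3, cross3, dot3, gradPerp, Fin.sum_univ_three, Pi.add_apply, Pi.sub_apply,
    Pi.smul_apply, smul_eq_mul, Matrix.cons_val_zero, Matrix.cons_val_one, Matrix.head_cons,
    Matrix.cons_val_two, Matrix.tail_cons]
    at hω0 hω1 hω2 hp0 hp1 hp2 ⊢
  simp (disch := fun_prop) only [pd_add, pd_sub, pd_mul, pd_neg, pd_const, pd_slice,
    deriv_fun_add, deriv_fun_sub, deriv_fun_mul, deriv_const, deriv_slice]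
    at hω0 hω1 hω2 hp0 hp1 hp2 ⊢
  simp (disch := first | decide | fun_prop) only [swap_t, swap_d]
    at hω0 hω1 hω2 hp0 hp1 hp2 ⊢
  linear_combination
    (Dw (dir 0) T (t, x)) * hω0 + (Dw (dir 1) T (t, x)) * hω1 + (Dw (dir 2) T (t, x)) * hω2 +
    (Dw (dir 1) (U 2) (t, x) - Dw (dir 2) (U 1) (t, x)) * hp0 +
    (Dw (dir 2) (U 0) (t, x) - Dw (dir 0) (U 2) (t, x)) * hp1 +
    (Dw (dir 0) (U 1) (t, x) - Dw (dir 1) (U 0) (t, x)) * hp2
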